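/- arXiv:1401.0217 — 6 statements merged into one kernel-verified Lean document; each statement's English description precedes it below -/
import Mathlib

section
/- Let X be a real random variable with log moment generating function Λ finite on all of ℝ, and let a = essinf X and b = esssup X (possibly infinite). If a < c < b, then there exists λ ∈ ℝ with Λ'(λ) = c; that is, the interior of the range of Λ' equals the open interval (a,b). -/
/-!
Since `Λ` is differentiable on all of `ℝ`, it suffices that `t ↦ Λ t - c t` attains a minimum,
i.e. that it tends to `+∞` at both ends. As `c < esssup X`, some `y > c` has `P(X ≥ y) > 0`, and
Chernoff's bound gives `Λ t ≥ t y + log P(X ≥ y)` for `t ≥ 0`; symmetrically at `-∞` via `essinf X`.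
-/

open MeasureTheory Real Filter

theorem exists_deriv_eq_of_tendsto_sub_mul {f : ℝ → ℝ} (hf : Differentiable ℝ f) {c : ℝ}
    (hbot : Tendsto (fun t => f t - c * t) atBot atTop)
    (htop : Tendsto (fun t => f t - c * t) atTop atTop) :
    ∃ x, deriv f x = c := by
  have hg : Differentiable ℝ (fun t => f t - c * t) := hf.sub (differentiable_id.const_mul c)
  obtain ⟨x, hx⟩ := hg.continuous.exists_forall_le <| by
    rw [cocompact_eq_atBot_atTop]
    exact hbot.sup htop
  have hmin : IsLocalMin (fun t => f t - c * t) x := Eventually.of_forall hx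
  have hderiv : HasDerivAt (fun t => f t - c * t) (deriv f x - c * 1) x :=
    (hf x).hasDerivAt.sub ((hasDerivAt_id' x).const_mul c)
  exact ⟨x, by linarith [hmin.hasDerivAt_eq_zero hderiv]⟩

namespace ProbabilityTheory

variable {Ω : Type*} [MeasurableSpace Ω] {μ : Measure Ω} {X : Ω → ℝ}

theorem differentiable_cgf (h_int : ∀ t, Integrable (fun ω => exp (t * X ω)) μ) :
    Differentiable ℝ (cgf X μ) := by
  have h_univ : integrableExpSet X μ = Set.univ := Set.eq_univ_of_forall h_int
  exact fun t => (analyticAt_cgf (by simp [h_univ])).differentiableAt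

variable [IsFiniteMeasure μ]

theorem add_log_measureReal_le_cgf {t y : ℝ} (ht : 0 ≤ t)
    (h_int : Integrable (fun ω => exp (t * X ω)) μ) (hpos : 0 < μ.real {ω | y ≤ X ω}) :
    t * y + log (μ.real {ω | y ≤ X ω}) ≤ cgf X μ t := by
  have hchernoff : exp (t * y) * μ.real {ω | y ≤ X ω} ≤ mgf X μ t := by
    have := measure_ge_le_exp_mul_mgf y ht h_int
    rw [neg_mul, exp_neg, inv_mul_eq_div, le_div_iff₀' (exp_pos _)] at this
    exact this
  calc t * y + log (μ.real {ω | y ≤ X ω})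
      = log (exp (t * y) * μ.real {ω | y ≤ X ω}) := by
        rw [log_mul (exp_ne_zero _) hpos.ne', log_exp]
    _ ≤ cgf X μ t := log_le_log (by positivity) hchernoff

theorem tendsto_cgf_sub_mul_atTop {c y : ℝ} (hcy : c < y)
    (h_int : ∀ t, 0 ≤ t → Integrable (fun ω => exp (t * X ω)) μ)
    (hpos : 0 < μ.real {ω | y ≤ X ω}) :
    Tendsto (fun t => cgf X μ t - c * t) atTop atTop := by
  have hlin : Tendsto (fun t : ℝ => t * (y - c) + log (μ.real {ω | y ≤ X ω})) atTop atTop :=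
    tendsto_atTop_add_const_right _ _ (tendsto_id.atTop_mul_const (sub_pos.mpr hcy))
  refine tendsto_atTop_mono' _ ?_ hlin
  filter_upwards [eventually_ge_atTop 0] with t ht
  linarith [add_log_measureReal_le_cgf ht (h_int t ht) hpos]

theorem tendsto_cgf_sub_mul_atBot {c y : ℝ} (hyc : y < c)
    (h_int : ∀ t, t ≤ 0 → Integrable (fun ω => exp (t * X ω)) μ)
    (hpos : 0 < μ.real {ω | X ω ≤ y}) :
    Tendsto (fun t => cgf X μ t - c * t) atBot atTop := by
  have hneg := tendsto_cgf_sub_mul_atTop (X := -X) (neg_lt_neg hyc)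
    (fun t ht => by simpa [neg_mul_comm] using h_int (-t) (neg_nonpos.mpr ht))
    (by simpa [neg_le_neg_iff] using hpos)
  simpa [Function.comp_def, cgf_neg, sub_eq_add_neg] using hneg.comp tendsto_neg_atBot_atTop

theorem exists_gt_measureReal_le_pos_of_lt_essSup {c : ℝ}
    (h : (c : EReal) < essSup (fun ω => (X ω : EReal)) μ) :
    ∃ y : ℝ, c < y ∧ 0 < μ.real {ω | y ≤ X ω} := by
  obtain ⟨y, hcy, hy⟩ := EReal.exists_between_coe_real h
  refine ⟨y, EReal.coe_lt_coe_iff.mp hcy, measureReal_nonneg.lt_of_ne' fun h0 => ?_⟩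
  have hae : ∀ᵐ ω ∂μ, (X ω : EReal) ≤ y := by
    rw [measureReal_eq_zero_iff] at h0
    filter_upwards [(ae_iff (p := fun ω => ¬ y ≤ X ω)).mpr (by simpa using h0)] with ω hω
    exact EReal.coe_le_coe_iff.mpr (not_le.mp hω).le
  exact hy.not_ge (essSup_le_of_ae_le _ hae)

theorem exists_lt_measureReal_le_pos_of_essInf_lt {c : ℝ}
    (h : essInf (fun ω => (X ω : EReal)) μ < c) :
    ∃ y : ℝ, y < c ∧ 0 < μ.real {ω | X ω ≤ y} := by
  obtain ⟨y, hy, hyc⟩ := EReal.exists_between_coe_real h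
  refine ⟨y, EReal.coe_lt_coe_iff.mp hyc, measureReal_nonneg.lt_of_ne' fun h0 => ?_⟩
  have hae : ∀ᵐ ω ∂μ, (y : EReal) ≤ X ω := by
    rw [measureReal_eq_zero_iff] at h0
    filter_upwards [(ae_iff (p := fun ω => ¬ X ω ≤ y)).mpr (by simpa using h0)] with ω hω
    exact EReal.coe_le_coe_iff.mpr (not_le.mp hω).le
  exact hy.not_ge (le_essInf_of_ae_le _ hae)

end ProbabilityTheory

open ProbabilityTheory

theorem exists_deriv_cgf_eq_general {Ω : Type*} [MeasurableSpace Ω] (μ : Measure Ω)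
    [IsProbabilityMeasure μ] (X : Ω → ℝ)
    (hint : ∀ l : ℝ, Integrable (fun ω => Real.exp (l * X ω)) μ)
    (Λ : ℝ → ℝ) (hΛ : ∀ l : ℝ, Λ l = Real.log (∫ ω, Real.exp (l * X ω) ∂μ))
    (c : ℝ)
    (hc1 : essInf (fun ω => (X ω : EReal)) μ < (c : EReal))
    (hc2 : (c : EReal) < essSup (fun ω => (X ω : EReal)) μ) :
    ∃ l : ℝ, deriv Λ l = c := by
  obtain rfl : Λ = cgf X μ := funext hΛ
  obtain ⟨a, hac, ha⟩ := exists_lt_measureReal_le_pos_of_essInf_lt hc1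
  obtain ⟨b, hcb, hb⟩ := exists_gt_measureReal_le_pos_of_lt_essSup hc2
  exact exists_deriv_eq_of_tendsto_sub_mul (differentiable_cgf hint)
    (tendsto_cgf_sub_mul_atBot hac (fun t _ => hint t) ha)
    (tendsto_cgf_sub_mul_atTop hcb (fun t _ => hint t) hb)

/-- If the log moment generating function `Λ` of a real random variable `X` is finite on
all of `ℝ`, and `a = essinf X < c < esssup X = b`, then there exists `λ` with `Λ'(λ) = c`;
that is, the interior of the range of `Λ'` equals the open interval `(a, b)`. -/
theorem exists_deriv_cgf_eq {Ω : Type*} [MeasurableSpace Ω] (μ : Measure Ω)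
    [IsProbabilityMeasure μ] (X : Ω → ℝ) (hX : Measurable X)
    (hint : ∀ l : ℝ, Integrable (fun ω => Real.exp (l * X ω)) μ)
    (Λ : ℝ → ℝ) (hΛ : ∀ l : ℝ, Λ l = Real.log (∫ ω, Real.exp (l * X ω) ∂μ))
    (c : ℝ)
    (hc1 : essInf (fun ω => (X ω : EReal)) μ < (c : EReal))
    (hc2 : (c : EReal) < essSup (fun ω => (X ω : EReal)) μ) :
    ∃ l : ℝ, deriv Λ l = c :=
  exists_deriv_cgf_eq_general μ X hint Λ hΛ c hc1 hc2
end

section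
/- Let X be a real random variable with log moment generating function Λ finite everywhere, and let a = essinf X. For any λ ∈ ℝ, Λ'(λ) ≥ a; moreover if a > −∞ then Λ'(λ) → a as λ → −∞. -/
/-!
`Λ'(λ)` is the mean of `X` under the tilted probability measure `e^{λX - Λ(λ)} μ`, which is
absolutely continuous with respect to `μ`, so it is at least `essinf X`.

For the limit, fix `η > 0` and `λ < 0`. Pointwise,
`(x - a) e^{λx} ≤ 2η e^{λx} + (2/|λ|) e^{λ(a+η)}`, while the Chernoff bound gives
`E e^{λX} ≥ e^{λ(a+η)} P(X ≤ a + η)`, and `P(X ≤ a + η) > 0` because `a` is the essential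
infimum. Hence `a ≤ Λ'(λ) ≤ a + 2η + 2 / (|λ| P(X ≤ a + η))`.
-/

open MeasureTheory Real Filter

open scoped Topology

namespace ProbabilityTheory

variable {Ω : Type*} {m : MeasurableSpace Ω} {μ : Measure Ω} {X : Ω → ℝ}

lemma essInf_coe_le_integral [IsProbabilityMeasure μ] (hX : Integrable X μ) :
    essInf (fun ω => (X ω : EReal)) μ ≤ ((μ[X] : ℝ) : EReal) := by
  have hae := ae_essInf_le (μ := μ) (f := fun ω => (X ω : EReal))
  induction h : essInf (fun ω => (X ω : EReal)) μ with
  | bot => exact bot_le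
  | top =>
    obtain ⟨ω, hω⟩ := hae.exists
    simp [h] at hω
  | coe b =>
    rw [h] at hae
    simpa using integral_mono_ae (integrable_const b) hX (hae.mono fun ω hω => by simpa using hω)

lemma essInf_coe_le_deriv_cgf [IsProbabilityMeasure μ] {t : ℝ}
    (ht : t ∈ interior (integrableExpSet X μ)) :
    essInf (fun ω => (X ω : EReal)) μ ≤ ((deriv (cgf X μ) t : ℝ) : EReal) := by
  have : IsProbabilityMeasure (μ.tilted (t * X ·)) :=
    isProbabilityMeasure_tilted (interior_subset (s := integrableExpSet X μ) ht)
  rw [← integral_tilted_mul_self ht]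
  exact (essInf_antitone_measure (tilted_absolutelyContinuous μ _)).trans
    (essInf_coe_le_integral ((memLp_tilted_mul ht 1).integrable le_rfl))

lemma measureReal_le_pos_of_essInf_lt [IsFiniteMeasure μ] {c : ℝ}
    (h : essInf (fun ω => (X ω : EReal)) μ < c) : 0 < μ.real {ω | X ω ≤ c} := by
  have hfreq := Filter.frequently_lt_of_liminf_lt (by isBoundedDefault) h
  refine ENNReal.toReal_pos (frequently_ae_iff.1 (hfreq.mono fun ω hω => ?_))
    (measure_ne_top _ _)
  exact_mod_cast hω.le

lemma sub_mul_exp_le {a x η l : ℝ} (hη : 0 < η) (hl : l < 0) :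
    (x - a) * exp (l * x) ≤ 2 * η * exp (l * x) + 2 / -l * exp (l * (a + η)) := by
  have hl' : 0 < 2 / -l := div_pos two_pos (neg_pos.2 hl)
  rcases le_or_gt (x - a) (2 * η) with hclose | hfar
  · nlinarith [exp_pos (l * x), exp_pos (l * (a + η))]
  · set s := -l * (x - a) / 2
    -- Half of the decay of `exp (l * x)` absorbs the factor `x - a`, since `s * exp (-s) ≤ 1`.
    have hsplit :
        (x - a) * exp (l * x) = 2 / -l * (s * exp (-s)) * exp (l * (a + (x - a) / 2)) := by
      have hexp : -s + l * (a + (x - a) / 2) = l * x := by ring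
      rw [mul_assoc (2 / -l), mul_assoc s, ← exp_add, hexp]
      simp only [s]
      field_simp [hl.ne]
    have hse : s * exp (-s) ≤ 1 :=
      (mul_exp_neg_le_exp_neg_one s).trans (exp_le_one_iff.2 (by norm_num))
    have hmono : exp (l * (a + (x - a) / 2)) ≤ exp (l * (a + η)) :=
      exp_le_exp.2 (mul_le_mul_of_nonpos_left (by linarith) hl.le)
    calc (x - a) * exp (l * x) ≤ 2 / -l * 1 * exp (l * (a + η)) := by
          rw [hsplit]; gcongr
      _ ≤ _ := by nlinarith [exp_pos (l * x)]

lemma deriv_cgf_le [IsProbabilityMeasure μ] {a η l : ℝ}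
    (hl_int : l ∈ interior (integrableExpSet X μ)) (hη : 0 < η) (hl : l < 0)
    (hc : 0 < μ.real {ω | X ω ≤ a + η}) :
    deriv (cgf X μ) l ≤ a + 2 * η + 2 / (-l * μ.real {ω | X ω ≤ a + η}) := by
  set c := μ.real {ω | X ω ≤ a + η}
  have he : Integrable (fun ω => exp (l * X ω)) μ :=
    interior_subset (s := integrableExpSet X μ) hl_int
  have hXe : Integrable (fun ω => X ω * exp (l * X ω)) μ := by
    simpa using integrable_pow_mul_exp_of_mem_interior_integrableExpSet hl_int 1
  have hM : 0 < mgf X μ l := mgf_pos he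
  have hnum : μ[fun ω => X ω * exp (l * X ω)] - a * mgf X μ l ≤
      2 * η * mgf X μ l + 2 / -l * exp (l * (a + η)) := by
    calc μ[fun ω => X ω * exp (l * X ω)] - a * mgf X μ l
        = μ[fun ω => (X ω - a) * exp (l * X ω)] := by
          simp_rw [sub_mul]
          rw [integral_sub hXe (he.const_mul a), integral_const_mul, mgf]
      _ ≤ μ[fun ω => 2 * η * exp (l * X ω) + 2 / -l * exp (l * (a + η))] :=
          integral_mono (by simp_rw [sub_mul]; exact hXe.sub (he.const_mul a))
            ((he.const_mul _).add (integrable_const _)) fun ω => sub_mul_exp_le hη hl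
      _ = 2 * η * mgf X μ l + 2 / -l * exp (l * (a + η)) := by
          rw [integral_add (he.const_mul _) (integrable_const _), integral_const_mul, mgf]
          simp
  have hexp : exp (l * (a + η)) ≤ mgf X μ l / c := by
    rw [le_div_iff₀ hc]
    calc exp (l * (a + η)) * c ≤ exp (l * (a + η)) * (exp (-l * (a + η)) * mgf X μ l) :=
          mul_le_mul_of_nonneg_left (measure_le_le_exp_mul_mgf _ hl.le he) (exp_pos _).le
      _ = mgf X μ l := by rw [← mul_assoc, ← exp_add]; simp
  rw [deriv_cgf hl_int, div_le_iff₀ hM]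
  calc μ[fun ω => X ω * exp (l * X ω)]
      ≤ a * mgf X μ l + 2 * η * mgf X μ l + 2 / -l * exp (l * (a + η)) := by linarith
    _ ≤ a * mgf X μ l + 2 * η * mgf X μ l + 2 / -l * (mgf X μ l / c) := by
      have : 0 < -l := neg_pos.2 hl
      gcongr
    _ = (a + 2 * η + 2 / (-l * c)) * mgf X μ l := by field_simp

lemma tendsto_deriv_cgf_atBot_essInf [IsProbabilityMeasure μ]
    (h : ∀ᶠ t in atBot, t ∈ interior (integrableExpSet X μ)) {a : ℝ}
    (ha : essInf (fun ω => (X ω : EReal)) μ = a) :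
    Tendsto (deriv (cgf X μ)) atBot (𝓝 a) := by
  refine tendsto_order.2 ⟨fun b hb => h.mono fun l hl => hb.trans_le ?_, fun b hb => ?_⟩
  · exact_mod_cast ha ▸ essInf_coe_le_deriv_cgf hl
  set η := (b - a) / 4
  have hb_eq : b = a + 4 * η := by simp only [η]; ring
  have hη : 0 < η := by linarith
  have hc : 0 < μ.real {ω | X ω ≤ a + η} :=
    measureReal_le_pos_of_essInf_lt (by rw [ha]; exact_mod_cast lt_add_of_pos_right a hη)
  have hsmall : ∀ᶠ l in atBot, 2 / (-l * μ.real {ω | X ω ≤ a + η}) < 2 * η :=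
    ((tendsto_neg_atBot_atTop.atTop_mul_const hc).const_div_atTop 2).eventually
      (gt_mem_nhds (by positivity))
  filter_upwards [h, hsmall, eventually_lt_atBot 0] with l hl_int hl_small hl
  linarith [deriv_cgf_le hl_int hη hl hc]

end ProbabilityTheory

theorem deriv_cgf_ge_essInf_general {Ω : Type*} [MeasurableSpace Ω] (μ : Measure Ω)
    [IsProbabilityMeasure μ] (X : Ω → ℝ)
    (hint : ∀ l : ℝ, Integrable (fun ω => Real.exp (l * X ω)) μ)
    (Λ : ℝ → ℝ) (hΛ : ∀ l : ℝ, Λ l = Real.log (∫ ω, Real.exp (l * X ω) ∂μ)) :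
    (∀ l : ℝ, essInf (fun ω => (X ω : EReal)) μ ≤ (↑(deriv Λ l) : EReal)) ∧
    (∀ a : ℝ, essInf (fun ω => (X ω : EReal)) μ = (a : EReal) →
      Tendsto (deriv Λ) atBot (nhds a)) := by
  obtain rfl : Λ = ProbabilityTheory.cgf X μ := funext hΛ
  have hint' : ∀ t, t ∈ interior (ProbabilityTheory.integrableExpSet X μ) := by
    simp [show ProbabilityTheory.integrableExpSet X μ = Set.univ from Set.eq_univ_of_forall hint]
  exact ⟨fun l => ProbabilityTheory.essInf_coe_le_deriv_cgf (hint' l),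
    fun a ha => ProbabilityTheory.tendsto_deriv_cgf_atBot_essInf (.of_forall hint') ha⟩

/-- If the log moment generating function `Λ` of a real random variable `X` is finite
everywhere and `a = essinf X`, then `Λ'(λ) ≥ a` for every `λ`; moreover if `a > -∞`
then `Λ'(λ) → a` as `λ → -∞`. -/
theorem deriv_cgf_ge_essInf {Ω : Type*} [MeasurableSpace Ω] (μ : Measure Ω)
    [IsProbabilityMeasure μ] (X : Ω → ℝ) (hX : Measurable X)
    (hint : ∀ l : ℝ, Integrable (fun ω => Real.exp (l * X ω)) μ)
    (Λ : ℝ → ℝ) (hΛ : ∀ l : ℝ, Λ l = Real.log (∫ ω, Real.exp (l * X ω) ∂μ)) :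
    (∀ l : ℝ, essInf (fun ω => (X ω : EReal)) μ ≤ (↑(deriv Λ l) : EReal)) ∧
    (∀ a : ℝ, essInf (fun ω => (X ω : EReal)) μ = (a : EReal) →
      Tendsto (deriv Λ) atBot (nhds a)) :=
  deriv_cgf_ge_essInf_general μ X hint Λ hΛ
end

section
/- Let X be a nonnegative real random variable with Λ(λ) = log E[e^{λX}], and define λ₀ = sup{λ : Λ(λ) < ∞}. Then lim_{ν ↓ 0} ν · Λ*(1/ν) = λ₀, where Λ* is the Fenchel–Legendre transform of Λ. -/
open MeasureTheory Real Filter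

/-- Let `X` be a nonnegative real random variable with log moment generating function `Λ`
(with values in `(-∞, ∞]`), and let `λ₀ = sup {λ : Λ λ < ∞} ∈ [0, ∞]`. Then
`ν * Λ*(1/ν) → λ₀` as `ν ↓ 0`, where `Λ*` is the Fenchel–Legendre transform of `Λ`. -/
theorem tendsto_mul_fenchelLegendre_inv {Ω : Type*} [MeasurableSpace Ω] (μ : Measure Ω)
    [IsProbabilityMeasure μ] (X : Ω → ℝ) (hX : Measurable X) (hXnn : ∀ ω, 0 ≤ X ω)
    (Λ : ℝ → EReal)
    (hΛ : ∀ l : ℝ, Λ l = ENNReal.log (∫⁻ ω, ENNReal.ofReal (Real.exp (l * X ω)) ∂μ))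
    (Λstar : ℝ → EReal)
    (hstar : ∀ x : ℝ, Λstar x = ⨆ l : ℝ, ((l * x : ℝ) : EReal) - Λ l) :
    Tendsto (fun ν : ℝ => ((ν : ℝ) : EReal) * Λstar (1 / ν)) (nhdsWithin 0 (Set.Ioi 0))
      (nhds (sSup ((fun l : ℝ => (l : EReal)) '' {l : ℝ | Λ l ≠ ⊤}))) := by
  set S := sSup ((fun l : ℝ => (l : EReal)) '' {l : ℝ | Λ l ≠ ⊤}) with hSdef
  -- Λ 0 = 0
  have hΛ0 : Λ 0 = 0 := by
    rw [hΛ]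
    simp [Real.exp_zero, lintegral_one, measure_univ]
  -- choose a ≥ 1 with μ {X ≤ a} > 0
  obtain ⟨n, hn⟩ : ∃ n : ℕ, μ {ω | X ω ≤ (n : ℝ)} ≠ 0 := by
    by_contra h
    push_neg at h
    have huniv : (Set.univ : Set Ω) = ⋃ n : ℕ, {ω | X ω ≤ (n : ℝ)} := by
      ext ω
      simp only [Set.mem_univ, Set.mem_iUnion, Set.mem_setOf_eq, true_iff]
      exact exists_nat_ge (X ω)
    have : μ Set.univ = 0 := by
      rw [huniv]; exact measure_iUnion_null h
    simp [measure_univ] at this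
  set a : ℝ := (n : ℝ) + 1 with ha_def
  have ha1 : (1 : ℝ) ≤ a := by
    have : (0:ℝ) ≤ (n:ℝ) := Nat.cast_nonneg n
    linarith
  set s : Set Ω := {ω | X ω ≤ a} with hs_def
  have hsm : MeasurableSet s := measurableSet_le hX measurable_const
  have hp_pos : μ s ≠ 0 := by
    intro h0
    refine hn (measure_mono_null ?_ h0)
    intro ω hω
    have hω' : X ω ≤ (n : ℝ) := hω
    have hna : (n : ℝ) ≤ a := by rw [ha_def]; linarith
    exact le_trans hω' hna
  have hp_le : μ s ≤ 1 := prob_le_one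
  have hp_ne_top : μ s ≠ ⊤ := (lt_of_le_of_lt hp_le ENNReal.one_lt_top).ne
  set L : ℝ := Real.log (μ s).toReal with hLdef
  have hp_toReal_pos : 0 < (μ s).toReal := ENNReal.toReal_pos hp_pos hp_ne_top
  have hp_toReal_le : (μ s).toReal ≤ 1 := by
    rw [← ENNReal.toReal_one]
    exact ENNReal.toReal_mono ENNReal.one_ne_top hp_le
  have hL0 : L ≤ 0 := Real.log_nonpos hp_toReal_pos.le hp_toReal_le
  have hlogp : ENNReal.log (μ s) = (L : EReal) := by
    rw [ENNReal.log, if_neg hp_pos, if_neg hp_ne_top]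
  -- lower bound on Λ l for l < 0
  have hlow : ∀ l : ℝ, l < 0 → ((l * a + L : ℝ) : EReal) ≤ Λ l := by
    intro l hl
    have hbound : ENNReal.ofReal (Real.exp (l * a)) * μ s
        ≤ ∫⁻ ω, ENNReal.ofReal (Real.exp (l * X ω)) ∂μ := by
      calc ENNReal.ofReal (Real.exp (l * a)) * μ s
          = ∫⁻ _ in s, ENNReal.ofReal (Real.exp (l * a)) ∂μ := (setLIntegral_const _ _).symm
        _ ≤ ∫⁻ ω in s, ENNReal.ofReal (Real.exp (l * X ω)) ∂μ := by
            refine setLIntegral_mono ((measurable_const.mul hX).exp.ennreal_ofReal) ?_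
            intro ω hω
            refine ENNReal.ofReal_le_ofReal (Real.exp_le_exp.2 ?_)
            exact mul_le_mul_of_nonpos_left hω hl.le
        _ ≤ ∫⁻ ω, ENNReal.ofReal (Real.exp (l * X ω)) ∂μ := setLIntegral_le_lintegral _ _
    have := ENNReal.log_monotone hbound
    rw [hΛ l]
    refine le_trans (le_of_eq ?_) this
    rw [ENNReal.log_mul_add, ENNReal.log_ofReal_of_pos (Real.exp_pos _), Real.log_exp, hlogp,
      ← EReal.coe_add]
  -- Λ l ≥ 0 for l ≥ 0
  have hge0 : ∀ l : ℝ, 0 ≤ l → (0 : EReal) ≤ Λ l := by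
    intro l hl
    have hbound : (1 : ENNReal) ≤ ∫⁻ ω, ENNReal.ofReal (Real.exp (l * X ω)) ∂μ := by
      calc (1 : ENNReal) = ∫⁻ _, 1 ∂μ := by simp [lintegral_one, measure_univ]
        _ ≤ ∫⁻ ω, ENNReal.ofReal (Real.exp (l * X ω)) ∂μ := by
            refine lintegral_mono fun ω => ?_
            rw [show (1 : ENNReal) = ENNReal.ofReal (Real.exp 0) by simp]
            exact ENNReal.ofReal_le_ofReal
              (Real.exp_le_exp.2 (mul_nonneg hl (hXnn ω)))
    have := ENNReal.log_monotone hbound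
    rw [ENNReal.log_one] at this
    rw [hΛ l]; exact this
  -- Λ l ≠ ⊥
  have hne_bot : ∀ l : ℝ, Λ l ≠ ⊥ := by
    intro l
    rcases le_or_gt 0 l with h | h
    · exact ((lt_of_lt_of_le (by simp : (⊥ : EReal) < 0) (hge0 l h))).ne'
    · exact ((lt_of_lt_of_le (EReal.bot_lt_coe _) (hlow l h))).ne'
  have h0mem : (0 : ℝ) ∈ {l : ℝ | Λ l ≠ ⊤} := by
    simp [hΛ0]
  have hS0 : (0 : EReal) ≤ S := by
    have : ((0 : ℝ) : EReal) ≤ S := le_sSup ⟨0, h0mem, rfl⟩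
    simpa using this
  refine tendsto_order.2 ⟨?_, ?_⟩
  · -- lower bound part
    intro b hb
    obtain ⟨e, ⟨l, hlmem, rfl⟩, hbl⟩ := lt_sSup_iff.1 hb
    have hlt : Λ l ≠ ⊤ := hlmem
    set c : ℝ := (Λ l).toReal with hcdef
    have hc : Λ l = (c : EReal) := (EReal.coe_toReal hlt (hne_bot l)).symm
    have key : ∀ ν : ℝ, 0 < ν → ((l - ν * c : ℝ) : EReal) ≤ (ν : EReal) * Λstar (1 / ν) := by
      intro ν hν
      have h1 : ((l * (1 / ν) : ℝ) : EReal) - Λ l ≤ Λstar (1 / ν) := by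
        rw [hstar (1 / ν)]
        exact le_iSup (fun l' : ℝ => ((l' * (1 / ν) : ℝ) : EReal) - Λ l') l
      have h2 : (ν : EReal) * (((l * (1 / ν) : ℝ) : EReal) - Λ l)
          ≤ (ν : EReal) * Λstar (1 / ν) :=
        mul_le_mul_of_nonneg_left h1 (by exact_mod_cast hν.le)
      refine le_trans (le_of_eq ?_) h2
      rw [hc, ← EReal.coe_sub, ← EReal.coe_mul]
      norm_cast
      field_simp
    have htd : Tendsto (fun ν : ℝ => ((l - ν * c : ℝ) : EReal)) (nhdsWithin 0 (Set.Ioi 0))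
        (nhds ((l : ℝ) : EReal)) := by
      have hcont : Tendsto (fun ν : ℝ => (l - ν * c : ℝ)) (nhds 0) (nhds l) := by
        have : Continuous fun ν : ℝ => (l - ν * c : ℝ) := continuous_const.sub (continuous_id.mul continuous_const)
        simpa using this.tendsto 0
      exact (continuous_coe_real_ereal.tendsto l).comp (hcont.mono_left nhdsWithin_le_nhds)
    filter_upwards [htd.eventually_const_lt hbl, self_mem_nhdsWithin] with ν h1 h2
    exact h1.trans_le (key ν h2)
  · -- upper bound part
    intro b hb
    have hS_ne_top : S ≠ ⊤ := hb.ne_top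
    have hS_ne_bot : S ≠ ⊥ := ne_bot_of_le_ne_bot (by simp) hS0
    set r : ℝ := S.toReal with hrdef
    have hr : S = (r : EReal) := (EReal.coe_toReal hS_ne_top hS_ne_bot).symm
    have hr0 : 0 ≤ r := by
      have := hS0; rw [hr] at this; exact_mod_cast this
    obtain ⟨q, hq1, hq2⟩ := EReal.exists_between_coe_real hb
    have hrq : r < q := by rw [hr] at hq1; exact_mod_cast hq1
    set ε : ℝ := q - r with hεdef
    have hε : 0 < ε := by linarith
    set ν₀ : ℝ := min (1 / a) (ε / (1 - L)) with hν₀def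
    have hν₀pos : 0 < ν₀ := by
      apply lt_min
      · positivity
      · apply div_pos hε; linarith
    have key : ∀ ν : ℝ, 0 < ν → ν ≤ ν₀ → (ν : EReal) * Λstar (1 / ν) ≤ ((r + ε : ℝ) : EReal) := by
      intro ν hν hνle
      have hνa : ν * a ≤ 1 := by
        have h1 : ν ≤ 1 / a := le_trans hνle (min_le_left _ _)
        calc ν * a ≤ (1 / a) * a := by
              exact mul_le_mul_of_nonneg_right h1 (by linarith)
          _ = 1 := by field_simp
      have hνL : ν * (1 - L) ≤ ε := by
        have h1 : ν ≤ ε / (1 - L) := le_trans hνle (min_le_right _ _)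
        have h2 : (0 : ℝ) < 1 - L := by linarith
        calc ν * (1 - L) ≤ (ε / (1 - L)) * (1 - L) :=
              mul_le_mul_of_nonneg_right h1 h2.le
          _ = ε := by field_simp
      have hΛstar_le : Λstar (1 / ν) ≤ (((r + ε) / ν : ℝ) : EReal) := by
        rw [hstar (1 / ν)]
        refine iSup_le fun l => ?_
        by_cases hl : Λ l = ⊤
        · rw [hl, EReal.sub_top]; exact bot_le
        · set c : ℝ := (Λ l).toReal with hcdef
          have hc : Λ l = (c : EReal) := (EReal.coe_toReal hl (hne_bot l)).symm
          have hlr : l ≤ r := by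
            have h1 : ((l : ℝ) : EReal) ≤ S := le_sSup ⟨l, hl, rfl⟩
            rw [hr] at h1; exact_mod_cast h1
          rw [hc, ← EReal.coe_sub]
          refine EReal.coe_le_coe_iff.2 ?_
          have hmain : l - ν * c ≤ r + ε := by
            rcases le_or_gt 0 l with h | h
            · have hc0 : (0 : ℝ) ≤ c := by
                have := hge0 l h; rw [hc] at this; exact_mod_cast this
              nlinarith
            · have hlc : l * a + L ≤ c := by
                have := hlow l h; rw [hc] at this; exact_mod_cast this
              nlinarith [mul_nonneg (by linarith : (0 : ℝ) ≤ 1 - ν * a)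
                (by linarith : (0 : ℝ) ≤ -l),
                mul_le_mul_of_nonneg_left hlc hν.le]
          calc l * (1 / ν) - c = (l - ν * c) / ν := by field_simp
            _ ≤ (r + ε) / ν := by gcongr
      have h2 : (ν : EReal) * Λstar (1 / ν) ≤ (ν : EReal) * (((r + ε) / ν : ℝ) : EReal) :=
        mul_le_mul_of_nonneg_left hΛstar_le (by exact_mod_cast hν.le)
      refine le_trans h2 (le_of_eq ?_)
      rw [← EReal.coe_mul]
      norm_cast
      field_simp
    have hmem : Set.Ioc (0 : ℝ) ν₀ ∈ nhdsWithin (0 : ℝ) (Set.Ioi 0) :=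
      Ioc_mem_nhdsGT_of_mem ⟨le_refl _, hν₀pos⟩
    filter_upwards [hmem] with ν hν
    refine lt_of_le_of_lt (key ν hν.1 hν.2) ?_
    have : (r + ε : ℝ) = q := by rw [hεdef]; ring
    rw [this]
    exact hq2
end

section
/- Let X₁, X₂, ... be i.i.d. nonnegative random variables with E[X₁] > 0 and E[exp(λ₀ X₁)] < ∞ for some λ₀ > 0. Let S_n = X₁ + ... + X_n and τ_x = inf{n ≥ 0 : S_n ≥ x}. Then there is a constant C > 0, depending only on the law of X₁ and λ₀, such that for all x ≥ 0 and all α > 0, P[S_{τ_x} − x ≥ α] ≤ C exp(−λ₀ α). -/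
open MeasureTheory Real ProbabilityTheory Finset

/-! The overshoot beyond `x` is at least `α` only if, for some `n` and `k`, the walk lies in
`(x - k - 1, x - k]` at time `n` and the next step satisfies `X n ≥ α + k`. The two events are
independent, and the second has probability at most `E[exp (λ₀ X)] exp (-λ₀ (α + k))` by the
Chernoff bound. The expected number of visits of the walk to an interval of length one is bounded
uniformly in the interval: after the first passage above its left end, the walk can only still be
in the interval at `m` steps later if `m` increments sum to at most `1`, which by Chernoff has
probability at most `exp λ₀ · E[exp (-λ₀ X)] ^ m`, and `E[exp (-λ₀ X)] < 1` since `E X > 0`.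
Summing the two geometric series gives the constant. -/

lemma exp_neg_mul_le_one {s y : ℝ} (hs : 0 ≤ s) (hy : 0 ≤ y) : exp (-s * y) ≤ 1 :=
  exp_le_one_iff.2 (mul_nonpos_of_nonpos_of_nonneg (neg_nonpos.2 hs) hy)

section Chernoff

variable {Ω : Type*} [MeasurableSpace Ω] {μ : Measure Ω} [IsFiniteMeasure μ] {Y : Ω → ℝ} {t : ℝ}

lemma measure_ge_le_ofReal_exp_mul_mgf (c : ℝ) (ht : 0 ≤ t)
    (hY : Integrable (fun ω => exp (t * Y ω)) μ) :
    μ {ω | c ≤ Y ω} ≤ ENNReal.ofReal (exp (-t * c) * mgf Y μ t) := by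
  rw [← ofReal_measureReal]
  exact ENNReal.ofReal_le_ofReal (measure_ge_le_exp_mul_mgf c ht hY)

lemma measure_le_le_ofReal_exp_mul_mgf (c : ℝ) (ht : t ≤ 0)
    (hY : Integrable (fun ω => exp (t * Y ω)) μ) :
    μ {ω | Y ω ≤ c} ≤ ENNReal.ofReal (exp (-t * c) * mgf Y μ t) := by
  rw [← ofReal_measureReal]
  exact ENNReal.ofReal_le_ofReal (measure_le_le_exp_mul_mgf c ht hY)

lemma integrable_exp_neg_mul_of_nonneg (hY : Measurable Y) (hnn : 0 ≤ Y) (ht : 0 ≤ t) :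
    Integrable (fun ω => exp (-t * Y ω)) μ :=
  (integrable_const 1).mono' (hY.const_mul _).exp.aestronglyMeasurable
    (.of_forall fun ω => by
      rw [norm_of_nonneg (exp_pos _).le]; exact exp_neg_mul_le_one ht (hnn ω))

end Chernoff

lemma mgf_neg_lt_one {Ω : Type*} [MeasurableSpace Ω] {μ : Measure Ω} [IsProbabilityMeasure μ]
    {Y : Ω → ℝ} {t : ℝ} (hY : Measurable Y) (hnn : 0 ≤ Y) (hpos : 0 < ∫ ω, Y ω ∂μ) (ht : 0 < t) :
    mgf Y μ (-t) < 1 := by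
  have hexp_le : ∀ ω, exp (-t * Y ω) ≤ 1 := fun ω => exp_neg_mul_le_one ht.le (hnn ω)
  have hint : Integrable (fun ω => exp (-t * Y ω)) μ :=
    integrable_exp_neg_mul_of_nonneg hY hnn ht.le
  have hsupp : Function.support (fun ω => 1 - exp (-t * Y ω)) = Function.support Y := by
    ext ω
    simp only [Function.mem_support, ne_eq, sub_eq_zero, eq_comm (a := (1 : ℝ)), exp_eq_one_iff,
      mul_eq_zero, neg_eq_zero, ht.ne', false_or]
  have hgap : 0 < ∫ ω, (1 - exp (-t * Y ω)) ∂μ := by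
    rw [integral_pos_iff_support_of_nonneg (fun ω => sub_nonneg.2 (hexp_le ω))
      ((integrable_const 1).sub hint), hsupp,
      ← integral_pos_iff_support_of_nonneg hnn (Integrable.of_integral_ne_zero hpos.ne')]
    exact hpos
  rw [integral_sub (integrable_const 1) hint, integral_const, probReal_univ, one_smul] at hgap
  exact sub_pos.1 hgap

section Blocks

variable {Ω ι β : Type*} [MeasurableSpace β]

abbrev blockSigma (X : ι → Ω → β) (S : Set ι) : MeasurableSpace Ω :=
  ⨆ i ∈ S, MeasurableSpace.comap (X i) ‹MeasurableSpace β›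

lemma measurable_blockSigma {X : ι → Ω → β} {S : Set ι} {i : ι} (hi : i ∈ S) :
    Measurable[blockSigma X S] (X i) :=
  measurable_iff_comap_le.2 <|
    le_iSup₂ (f := fun j (_ : j ∈ S) => MeasurableSpace.comap (X j) ‹MeasurableSpace β›) i hi

lemma measurable_sum_blockSigma {X : ι → Ω → ℝ} {S : Set ι} {s : Finset ι} (hs : ↑s ⊆ S) :
    Measurable[blockSigma X S] fun ω => ∑ i ∈ s, X i ω :=
  Finset.measurable_sum s fun _ hi => measurable_blockSigma (hs hi)

variable [MeasurableSpace Ω] {μ : Measure Ω}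

lemma blockSigma_le {X : ι → Ω → β} (hmeas : ∀ i, Measurable (X i)) (S : Set ι) :
    blockSigma X S ≤ ‹MeasurableSpace Ω› :=
  iSup₂_le fun i _ => (hmeas i).comap_le

lemma ProbabilityTheory.iIndepFun.measure_inter_eq_mul_of_disjoint {X : ι → Ω → β}
    (hindep : iIndepFun X μ) (hmeas : ∀ i, Measurable (X i)) {S T : Set ι} (hST : Disjoint S T)
    {A B : Set Ω}
    (hA : MeasurableSet[blockSigma X S] A) (hB : MeasurableSet[blockSigma X T] B) :
    μ (A ∩ B) = μ A * μ B :=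
  (Indep_iff _ _ μ).1 (indep_iSup_of_disjoint (fun i => (hmeas i).comap_le) hindep.iIndep hST)
    A B hA hB

end Blocks

section IID

variable {Ω : Type*} [MeasurableSpace Ω] {μ : Measure Ω} [IsProbabilityMeasure μ]
  {X : ℕ → Ω → ℝ} {t : ℝ}

lemma measure_sum_le_le_exp_mul_mgf_pow (hmeas : ∀ i, Measurable (X i)) (hindep : iIndepFun X μ)
    (hident : ∀ i, IdentDistrib (X i) (X 0) μ μ) (hnn : ∀ i ω, 0 ≤ X i ω) (ht : 0 < t)
    (s : Finset ℕ) (c : ℝ) :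
    μ {ω | ∑ i ∈ s, X i ω ≤ c} ≤ ENNReal.ofReal (exp (t * c) * mgf (X 0) μ (-t) ^ #s) := by
  have hint : Integrable (fun ω => exp (-t * ∑ i ∈ s, X i ω)) μ :=
    integrable_exp_neg_mul_of_nonneg (Finset.measurable_sum s fun i _ => hmeas i)
      (fun ω => sum_nonneg fun i _ => hnn i ω) ht.le
  have hmgf : mgf (fun ω => ∑ i ∈ s, X i ω) μ (-t) = mgf (X 0) μ (-t) ^ #s := by
    rw [← Finset.sum_fn, hindep.mgf_sum hmeas]
    exact prod_eq_pow_card fun i _ => mgf_congr_of_identDistrib _ _ (hident i) _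
  simpa only [hmgf, neg_neg] using
    measure_le_le_ofReal_exp_mul_mgf (Y := fun ω => ∑ i ∈ s, X i ω) c (neg_nonpos.2 ht.le) hint

lemma measure_ge_le_exp_mul_mgf_of_identDistrib (hident : ∀ i, IdentDistrib (X i) (X 0) μ μ)
    (ht : 0 ≤ t) (hexp : Integrable (fun ω => exp (t * X 0 ω)) μ) (n : ℕ) (c : ℝ) :
    μ {ω | c ≤ X n ω} ≤ ENNReal.ofReal (exp (-t * c) * mgf (X 0) μ t) := by
  have h := (hident n).measure_mem_eq (measurableSet_Ici (a := c))
  simp only [Set.preimage, Set.mem_Ici] at h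
  exact h ▸ measure_ge_le_ofReal_exp_mul_mgf c ht hexp

end IID

lemma tsum_ofReal_mul_geometric {a r : ℝ} (ha : 0 ≤ a) (hr₀ : 0 ≤ r) (hr₁ : r < 1) :
    ∑' m : ℕ, ENNReal.ofReal (a * r ^ m) = ENNReal.ofReal (a * (1 - r)⁻¹) := by
  rw [← ENNReal.ofReal_tsum_of_nonneg (fun m => by positivity)
    ((summable_geometric_of_lt_one hr₀ hr₁).mul_left a), tsum_mul_left,
    tsum_geometric_of_lt_one hr₀ hr₁]

lemma ENNReal.tsum_mul_tsum_eq_tsum_sum_range (f g : ℕ → ENNReal) :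
    (∑' n, f n) * ∑' n, g n = ∑' n, ∑ k ∈ range (n + 1), f k * g (n - k) :=
  calc (∑' n, f n) * ∑' n, g n = ∑' kl : ℕ × ℕ, f kl.1 * g kl.2 := by
        rw [ENNReal.tsum_prod (f := fun k l => f k * g l), ← ENNReal.tsum_mul_right]
        simp only [ENNReal.tsum_mul_left]
    _ = ∑' p : (n : ℕ) × antidiagonal n, f p.2.1.1 * g p.2.1.2 :=
        (HasAntidiagonal.sigmaAntidiagonalEquivProd.tsum_eq (fun kl => f kl.1 * g kl.2)).symm
    _ = ∑' n, ∑ kl ∈ antidiagonal n, f kl.1 * g kl.2 := by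
        rw [ENNReal.tsum_sigma']
        simp only [Finset.tsum_subtype (f := fun kl : ℕ × ℕ => f kl.1 * g kl.2)]
    _ = ∑' n, ∑ k ∈ range (n + 1), f k * g (n - k) := by
        simp only [Nat.sum_antidiagonal_eq_sum_range_succ fun k l => f k * g l]

section Renewal

variable {Ω : Type*} {X : ℕ → Ω → ℝ} {y : ℝ}

def firstPassageAt (X : ℕ → Ω → ℝ) (y : ℝ) (j : ℕ) : Set Ω :=
  {ω | y < ∑ l ∈ range j, X l ω ∧ ∀ i < j, ∑ l ∈ range i, X l ω ≤ y}

lemma pairwise_disjoint_firstPassageAt :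
    Pairwise (Function.onFun Disjoint (firstPassageAt X y)) := by
  intro j j' hne
  refine Set.disjoint_left.2 fun ω hj hj' => ?_
  rcases hne.lt_or_gt with h | h
  · exact (hj'.2 j h).not_gt hj.1
  · exact (hj.2 j' h).not_gt hj'.1

lemma setOf_sum_range_mem_Ioc_subset (n : ℕ) :
    {ω | ∑ l ∈ range n, X l ω ∈ Set.Ioc y (y + 1)}
      ⊆ ⋃ j ∈ range (n + 1), firstPassageAt X y j ∩ {ω | ∑ i ∈ Ico j n, X i ω ≤ 1} := by
  rintro ω ⟨hy, hy1⟩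
  have hex : ∃ j, y < ∑ l ∈ range j, X l ω := ⟨n, hy⟩
  have hjn : Nat.find hex ≤ n := Nat.find_min' hex hy
  have hfirst := Nat.find_spec hex
  refine Set.mem_biUnion (mem_range.2 (Nat.lt_succ_of_le hjn))
    ⟨⟨hfirst, fun i hi => not_lt.1 (Nat.find_min hex hi)⟩, ?_⟩
  show ∑ i ∈ Ico (Nat.find hex) n, X i ω ≤ 1
  rw [sum_Ico_eq_sub _ hjn]
  linarith

lemma measurableSet_firstPassageAt (j : ℕ) :
    MeasurableSet[blockSigma X (Set.Iio j)] (firstPassageAt X y j) := by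
  have hsum : ∀ i ≤ j, Measurable[blockSigma X (Set.Iio j)] fun ω => ∑ l ∈ range i, X l ω :=
    fun i hi => measurable_sum_blockSigma fun l hl => by
      simp only [coe_range, Set.mem_Iio] at hl ⊢; omega
  have hset : firstPassageAt X y j = {ω | y < ∑ l ∈ range j, X l ω}
      ∩ ⋂ i ∈ Set.Iio j, {ω | ∑ l ∈ range i, X l ω ≤ y} := by
    ext ω; simp [firstPassageAt]
  rw [hset]
  exact (measurableSet_lt measurable_const (hsum j le_rfl)).inter <|
    .biInter (Set.to_countable _) fun i hi =>
      measurableSet_le (hsum i (le_of_lt hi)) measurable_const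

variable [MeasurableSpace Ω] {μ : Measure Ω} [IsProbabilityMeasure μ] {t : ℝ}

lemma tsum_measure_firstPassageAt_le_one (hmeas : ∀ i, Measurable (X i)) :
    ∑' j, μ (firstPassageAt X y j) ≤ 1 := by
  rw [← measure_iUnion pairwise_disjoint_firstPassageAt
    fun j => blockSigma_le hmeas _ _ (measurableSet_firstPassageAt j)]
  exact prob_le_one

lemma measure_firstPassageAt_inter_le (hmeas : ∀ i, Measurable (X i)) (hindep : iIndepFun X μ)
    (hident : ∀ i, IdentDistrib (X i) (X 0) μ μ) (hnn : ∀ i ω, 0 ≤ X i ω) (ht : 0 < t)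
    (j n : ℕ) :
    μ (firstPassageAt X y j ∩ {ω | ∑ i ∈ Ico j n, X i ω ≤ 1})
      ≤ μ (firstPassageAt X y j) * ENNReal.ofReal (exp t * mgf (X 0) μ (-t) ^ (n - j)) := by
  have hblock : MeasurableSet[blockSigma X (Set.Ici j)] {ω | ∑ i ∈ Ico j n, X i ω ≤ 1} :=
    measurableSet_le (measurable_sum_blockSigma fun i hi => (mem_Ico.1 hi).1) measurable_const
  rw [hindep.measure_inter_eq_mul_of_disjoint hmeas (Set.Iio_disjoint_Ici le_rfl)
    (measurableSet_firstPassageAt j) hblock]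
  gcongr
  simpa only [mul_one, Nat.card_Ico] using
    measure_sum_le_le_exp_mul_mgf_pow hmeas hindep hident hnn ht (Ico j n) 1

theorem tsum_measure_sum_range_mem_Ioc_le (hmeas : ∀ i, Measurable (X i))
    (hindep : iIndepFun X μ) (hident : ∀ i, IdentDistrib (X i) (X 0) μ μ)
    (hnn : ∀ i ω, 0 ≤ X i ω) (hmean : 0 < ∫ ω, X 0 ω ∂μ) (ht : 0 < t) (y : ℝ) :
    ∑' n, μ {ω | ∑ l ∈ range n, X l ω ∈ Set.Ioc y (y + 1)}
      ≤ ENNReal.ofReal (exp t * (1 - mgf (X 0) μ (-t))⁻¹) := by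
  set ρ := mgf (X 0) μ (-t)
  set b : ℕ → ENNReal := fun m => ENNReal.ofReal (exp t * ρ ^ m)
  have hρ : ρ < 1 := mgf_neg_lt_one (hmeas 0) (hnn 0) hmean ht
  calc ∑' n, μ {ω | ∑ l ∈ range n, X l ω ∈ Set.Ioc y (y + 1)}
      ≤ ∑' n, ∑ j ∈ range (n + 1), μ (firstPassageAt X y j) * b (n - j) :=
        ENNReal.tsum_le_tsum fun n => (measure_mono (setOf_sum_range_mem_Ioc_subset n)).trans <|
          (measure_biUnion_finset_le _ _).trans <| sum_le_sum fun j _ =>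
            measure_firstPassageAt_inter_le hmeas hindep hident hnn ht j n
    _ = (∑' j, μ (firstPassageAt X y j)) * ∑' m, b m :=
        (ENNReal.tsum_mul_tsum_eq_tsum_sum_range _ _).symm
    _ ≤ 1 * ∑' m, b m := by gcongr; exact tsum_measure_firstPassageAt_le_one hmeas
    _ = ENNReal.ofReal (exp t * (1 - ρ)⁻¹) := by
        rw [one_mul, tsum_ofReal_mul_geometric (exp_pos t).le mgf_nonneg hρ]

end Renewal

section Overshoot

lemma exists_sum_range_mem_Ioc_of_le_overshoot {a : ℕ → ℝ} {x α : ℝ} (hxα : 0 < x + α)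
    (h : α ≤ ∑ j ∈ range (sInf {n | x ≤ ∑ j ∈ range n, a j}), a j - x) :
    ∃ n k : ℕ, ∑ j ∈ range n, a j ∈ Set.Ioc (x - k - 1) (x - k) ∧ α + k ≤ a n := by
  set T := {n | x ≤ ∑ j ∈ range n, a j}
  have hτ : sInf T ≠ 0 := fun h0 => by
    rw [h0, range_zero, sum_empty] at h
    linarith
  obtain ⟨n, hn⟩ := Nat.exists_eq_succ_of_ne_zero hτ
  have hbelow : ∑ j ∈ range n, a j < x :=
    not_le.1 fun hle => by have := Nat.sInf_le (show n ∈ T from hle); omega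
  rw [hn, sum_range_succ] at h
  refine ⟨n, ⌊x - ∑ j ∈ range n, a j⌋₊, ⟨?_, ?_⟩, ?_⟩
  · linarith [Nat.lt_floor_add_one (x - ∑ j ∈ range n, a j)]
  · linarith [Nat.floor_le (sub_nonneg.2 hbelow.le)]
  · linarith [Nat.floor_le (sub_nonneg.2 hbelow.le)]

variable {Ω : Type*} [MeasurableSpace Ω] {μ : Measure Ω} [IsProbabilityMeasure μ]
  {X : ℕ → Ω → ℝ} {t : ℝ}

lemma measure_overshoot_le (hmeas : ∀ i, Measurable (X i)) (hindep : iIndepFun X μ)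
    (hident : ∀ i, IdentDistrib (X i) (X 0) μ μ) (ht : 0 ≤ t)
    (hexp : Integrable (fun ω => exp (t * X 0 ω)) μ) {x α : ℝ} (hxα : 0 < x + α) :
    μ {ω | α ≤ ∑ j ∈ range (sInf {n | x ≤ ∑ j ∈ range n, X j ω}), X j ω - x}
      ≤ ∑' k : ℕ, (∑' n, μ {ω | ∑ j ∈ range n, X j ω ∈ Set.Ioc (x - k - 1) (x - k)})
          * ENNReal.ofReal (exp (-t * (α + k)) * mgf (X 0) μ t) := by
  set A : ℕ → ℕ → Set Ω := fun n k => {ω | ∑ j ∈ range n, X j ω ∈ Set.Ioc (x - k - 1) (x - k)}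
  have hsplit : ∀ n k : ℕ, μ (A n k ∩ {ω | α + k ≤ X n ω})
      ≤ μ (A n k) * ENNReal.ofReal (exp (-t * (α + k)) * mgf (X 0) μ t) := fun n k => by
    have hA : MeasurableSet[blockSigma X (Set.Iio n)] (A n k) :=
      measurable_sum_blockSigma (fun j hj => by simpa using hj) measurableSet_Ioc
    have hX : MeasurableSet[blockSigma X (Set.Ici n)] {ω | α + k ≤ X n ω} :=
      measurableSet_le measurable_const (measurable_blockSigma (Set.mem_Ici.2 le_rfl))
    rw [hindep.measure_inter_eq_mul_of_disjoint hmeas (Set.Iio_disjoint_Ici le_rfl) hA hX]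
    gcongr
    exact measure_ge_le_exp_mul_mgf_of_identDistrib hident ht hexp n _
  calc μ {ω | α ≤ ∑ j ∈ range (sInf {n | x ≤ ∑ j ∈ range n, X j ω}), X j ω - x}
      ≤ μ (⋃ n, ⋃ k : ℕ, A n k ∩ {ω | α + k ≤ X n ω}) := measure_mono fun ω hω => by
        obtain ⟨n, k, hA, hX⟩ := exists_sum_range_mem_Ioc_of_le_overshoot hxα hω
        exact Set.mem_iUnion₂.2 ⟨n, k, hA, hX⟩
    _ ≤ ∑' n, ∑' k : ℕ, μ (A n k ∩ {ω | α + k ≤ X n ω}) :=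
        (measure_iUnion_le _).trans (ENNReal.tsum_le_tsum fun n => measure_iUnion_le _)
    _ ≤ ∑' n, ∑' k : ℕ, μ (A n k) * ENNReal.ofReal (exp (-t * (α + k)) * mgf (X 0) μ t) :=
        ENNReal.tsum_le_tsum fun n => ENNReal.tsum_le_tsum fun k => hsplit n k
    _ = _ := by rw [ENNReal.tsum_comm]; simp only [A, ENNReal.tsum_mul_right]

end Overshoot

/-- Overshoot estimate: if `X₁, X₂, …` are i.i.d. nonnegative random variables with
`E[X₁] > 0` and `E[exp (λ₀ X₁)] < ∞` for some `λ₀ > 0`, `Sₙ = X₁ + ⋯ + Xₙ` and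
`τ_x = inf {n ≥ 0 : Sₙ ≥ x}`, then there is `C > 0` (depending only on the law of `X₁`
and `λ₀`) with `P[S_{τ_x} - x ≥ α] ≤ C exp (-λ₀ α)` for all `x ≥ 0` and `α > 0`. -/
theorem overshoot_exponential_tail {Ω : Type*} [MeasurableSpace Ω] (μ : Measure Ω)
    [IsProbabilityMeasure μ] (X : ℕ → Ω → ℝ) (hmeas : ∀ i, Measurable (X i))
    (hindep : ProbabilityTheory.iIndepFun X μ)
    (hident : ∀ i, ProbabilityTheory.IdentDistrib (X i) (X 0) μ μ)
    (hnn : ∀ i ω, 0 ≤ X i ω)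
    (hmean : 0 < ∫ ω, X 0 ω ∂μ)
    (l₀ : ℝ) (hl₀ : 0 < l₀)
    (hexp : Integrable (fun ω => Real.exp (l₀ * X 0 ω)) μ) :
    ∃ C : ℝ, 0 < C ∧ ∀ x : ℝ, 0 ≤ x → ∀ α : ℝ, 0 < α →
      μ {ω | α ≤ (∑ j ∈ Finset.range (sInf {n : ℕ | x ≤ ∑ j ∈ Finset.range n, X j ω}),
          X j ω) - x}
        ≤ ENNReal.ofReal (C * Real.exp (-l₀ * α)) := by
  set M := mgf (X 0) μ l₀
  set R := exp l₀ * (1 - mgf (X 0) μ (-l₀))⁻¹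
  have hR : 0 < R := mul_pos (exp_pos l₀)
    (inv_pos.2 (sub_pos.2 (mgf_neg_lt_one (hmeas 0) (hnn 0) hmean hl₀)))
  have hq : exp (-l₀) < 1 := exp_lt_one_iff.2 (neg_neg_of_pos hl₀)
  refine ⟨R * M * (1 - exp (-l₀))⁻¹,
    mul_pos (mul_pos hR (mgf_pos hexp)) (inv_pos.2 (sub_pos.2 hq)), fun x hx α hα => ?_⟩
  have hexp_geom : ∀ k : ℕ, exp (-l₀ * (α + k)) * M = M * exp (-l₀ * α) * exp (-l₀) ^ k :=
    fun k => by rw [← exp_nat_mul, mul_add, exp_add]; ring_nf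
  calc _ ≤ _ := measure_overshoot_le hmeas hindep hident hl₀.le hexp (by linarith)
    _ ≤ ∑' k : ℕ, ENNReal.ofReal R * ENNReal.ofReal (M * exp (-l₀ * α) * exp (-l₀) ^ k) := by
        refine ENNReal.tsum_le_tsum fun k => ?_
        rw [hexp_geom]
        gcongr
        simpa only [sub_add_cancel] using
          tsum_measure_sum_range_mem_Ioc_le hmeas hindep hident hnn hmean hl₀ (x - k - 1)
    _ = ENNReal.ofReal (R * M * (1 - exp (-l₀))⁻¹ * exp (-l₀ * α)) := by
        rw [ENNReal.tsum_mul_left,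
          tsum_ofReal_mul_geometric (mul_nonneg mgf_nonneg (exp_pos _).le) (exp_pos _).le hq,
          ← ENNReal.ofReal_mul hR.le]
        congr 1
        ring
end

section
/- Let (X_j) be i.i.d. real random variables with E[exp(λ₀ X₁)] < ∞ for some λ₀ > 0, let S_n = X₁ + ... + X_n, and let N be a positive integer-valued random variable (not necessarily independent of the X_j) satisfying P[N ≥ k] ≤ q^{k−1} for all k ∈ ℕ, for some q ∈ (0,1). Then there exist constants C, c > 0, depending only on q and the law of X₁, such that P[S_N > α] ≤ C exp(−c α) for every α > 0. -/
/-! On `{N ≤ m}` the stopped sum can exceed `α` only if some `S_k` with `k ≤ m` does, so a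
union bound and Chernoff's inequality give
`P[S_N > α] ≤ q^m + e^{-λ₀ α} ∑_{k ≤ m} M^k` with `M = E[exp (λ₀ X₁)]`, whatever the
dependence between `N` and the `X_j`. Choosing `m` proportional to `α`, with a slope small
enough that `M^m` grows at most like `e^{λ₀ α / 2}`, makes both terms exponentially small
in `α`. -/

open MeasureTheory Real Filter

open ProbabilityTheory Finset

namespace ProbabilityTheory

theorem IdentDistrib.mgf_eq {Ω Ω' : Type*} [MeasurableSpace Ω] [MeasurableSpace Ω']
    {μ : Measure Ω} {ν : Measure Ω'} {Y : Ω → ℝ} {Z : Ω' → ℝ}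
    (h : IdentDistrib Y Z μ ν) (t : ℝ) : mgf Y μ t = mgf Z ν t :=
  (h.comp (measurable_const_mul t).exp).integral_eq

variable {Ω : Type*} [MeasurableSpace Ω] {μ : Measure Ω} {X : ℕ → Ω → ℝ} {t : ℝ}

theorem iIndepFun.mgf_sum_range_of_identDistrib (hindep : iIndepFun X μ)
    (hident : ∀ i, IdentDistrib (X i) (X 0) μ μ) (n : ℕ) :
    mgf (∑ j ∈ range n, X j) μ t = mgf (X 0) μ t ^ n := by
  rw [hindep.mgf_sum₀ fun i => (hident i).aemeasurable_fst, prod_congr rfl fun i _ =>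
    (hident i).mgf_eq t, prod_const, card_range]

theorem iIndepFun.measureReal_le_sum_range_le (hindep : iIndepFun X μ)
    (hident : ∀ i, IdentDistrib (X i) (X 0) μ μ) (ht : 0 ≤ t)
    (hint : Integrable (fun ω => exp (t * X 0 ω)) μ) (α : ℝ) (n : ℕ) :
    μ.real {ω | α ≤ ∑ j ∈ range n, X j ω} ≤ exp (-t * α) * mgf (X 0) μ t ^ n := by
  have := hindep.isProbabilityMeasure
  have hmgf := hindep.mgf_sum_range_of_identDistrib hident (t := t) n
  have hint_sum : Integrable (fun ω => exp (t * (∑ j ∈ range n, X j) ω)) μ :=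
    mgf_pos_iff.mp (hmgf ▸ pow_pos (mgf_pos hint) n)
  simpa only [Finset.sum_apply, hmgf] using measure_ge_le_exp_mul_mgf α ht hint_sum

end ProbabilityTheory

theorem measure_lt_stopped_le_add_sum {Ω : Type*} [MeasurableSpace Ω] (μ : Measure Ω)
    (S : ℕ → Ω → ℝ) (N : Ω → ℕ) (α : ℝ) (m : ℕ) :
    μ {ω | α < S (N ω) ω} ≤
      μ {ω | m + 1 ≤ N ω} + ∑ k ∈ range (m + 1), μ {ω | α ≤ S k ω} := by
  have hsub : {ω | α < S (N ω) ω} ⊆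
      {ω | m + 1 ≤ N ω} ∪ ⋃ k ∈ range (m + 1), {ω | α ≤ S k ω} := by
    intro ω hω
    by_cases hN : m + 1 ≤ N ω
    · exact Or.inl hN
    · exact Or.inr <|
        Set.mem_biUnion (mem_range.mpr (not_le.mp hN)) (le_of_lt hω : α ≤ S (N ω) ω)
  calc μ {ω | α < S (N ω) ω}
      ≤ μ {ω | m + 1 ≤ N ω} + μ (⋃ k ∈ range (m + 1), {ω | α ≤ S k ω}) :=
        (measure_mono hsub).trans (measure_union_le _ _)
    _ ≤ _ := by gcongr; exact measure_biUnion_finset_le _ _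

/-- The factor `exp 1` absorbs the number of terms, since `m + 1 ≤ exp m`. -/
theorem sum_range_succ_pow_le_exp_one_mul_pow {M : ℝ} (hM : 0 ≤ M) (m : ℕ) :
    ∑ k ∈ range (m + 1), M ^ k ≤ (exp 1 * (M + 1)) ^ m := by
  calc ∑ k ∈ range (m + 1), M ^ k
      ≤ ∑ _k ∈ range (m + 1), (M + 1) ^ m := by
        gcongr with k hk
        calc M ^ k ≤ (M + 1) ^ k := by gcongr; linarith
          _ ≤ (M + 1) ^ m := pow_le_pow_right₀ (by linarith) (mem_range_succ_iff.mp hk)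
    _ = (m + 1) * (M + 1) ^ m := by simp
    _ ≤ exp 1 ^ m * (M + 1) ^ m := by
        gcongr
        rw [← exp_nat_mul, mul_one]
        exact add_one_le_exp _
    _ = (exp 1 * (M + 1)) ^ m := (mul_pow _ _ _).symm

/-- Truncating at `m = ⌊s α⌋` with `s log K ≤ t / 2` balances the two terms. -/
theorem exists_pow_add_pow_mul_exp_le {q K t : ℝ} (hq0 : 0 < q) (hq1 : q < 1) (hK : 1 ≤ K)
    (ht : 0 < t) :
    ∃ C c : ℝ, 0 < C ∧ 0 < c ∧ ∀ α : ℝ, 0 ≤ α →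
      ∃ m : ℕ, q ^ m + K ^ m * exp (-t * α) ≤ C * exp (-c * α) := by
  have hlogq : 0 < -log q := neg_pos.mpr (log_neg hq0 hq1)
  have hlogK : 0 ≤ log K := log_nonneg hK
  set s := t / (2 * (log K + 1)) with hs
  have hs0 : 0 < s := by positivity
  have hsK : s * log K ≤ t / 2 := by
    rw [hs, div_mul_eq_mul_div, div_le_div_iff₀ (by positivity) two_pos]
    nlinarith
  obtain ⟨c, hc0, hcq, hct⟩ : ∃ c, 0 < c ∧ c ≤ -log q * s ∧ c ≤ t / 2 :=
    ⟨_, lt_min (by positivity) (by positivity), min_le_left _ _, min_le_right _ _⟩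
  refine ⟨q⁻¹ + 1, c, by positivity, hc0, fun α hα => ⟨⌊s * α⌋₊, ?_⟩⟩
  have hm_le : (⌊s * α⌋₊ : ℝ) ≤ s * α := Nat.floor_le (by positivity)
  have hm_gt : s * α - 1 < ⌊s * α⌋₊ := by linarith [Nat.lt_floor_add_one (s * α)]
  have hq_pow : q ^ ⌊s * α⌋₊ ≤ q⁻¹ * exp (-c * α) := by
    rw [← rpow_natCast, rpow_def_of_pos hq0, ← exp_log (inv_pos.mpr hq0), ← exp_add, log_inv]
    gcongr
    nlinarith
  have hK_pow : K ^ ⌊s * α⌋₊ * exp (-t * α) ≤ exp (-c * α) := by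
    rw [← rpow_natCast, rpow_def_of_pos (by linarith), ← exp_add]
    gcongr
    nlinarith
  linarith

theorem stopped_sum_exponential_tail_general {Ω : Type*} [MeasurableSpace Ω] (μ : Measure Ω)
    (X : ℕ → Ω → ℝ)
    (hindep : ProbabilityTheory.iIndepFun X μ)
    (hident : ∀ i, ProbabilityTheory.IdentDistrib (X i) (X 0) μ μ)
    (l₀ : ℝ) (hl₀ : 0 < l₀)
    (hexp : Integrable (fun ω => Real.exp (l₀ * X 0 ω)) μ)
    (N : Ω → ℕ)
    (q : ℝ) (hq0 : 0 < q) (hq1 : q < 1)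
    (hNtail : ∀ k : ℕ, 1 ≤ k → μ {ω | k ≤ N ω} ≤ ENNReal.ofReal (q ^ (k - 1))) :
    ∃ C c : ℝ, 0 < C ∧ 0 < c ∧ ∀ α : ℝ, 0 < α →
      μ {ω | α < ∑ j ∈ Finset.range (N ω), X j ω} ≤ ENNReal.ofReal (C * Real.exp (-c * α)) := by
  have := hindep.isProbabilityMeasure
  set M := mgf (X 0) μ l₀
  have hM : 0 ≤ M := mgf_nonneg
  have hK : 1 ≤ exp 1 * (M + 1) :=
    one_le_mul_of_one_le_of_one_le (one_le_exp zero_le_one) (by linarith)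
  obtain ⟨C, c, hC, hc, hdecay⟩ := exists_pow_add_pow_mul_exp_le hq0 hq1 hK hl₀
  refine ⟨C, c, hC, hc, fun α hα => ?_⟩
  obtain ⟨m, hm⟩ := hdecay α hα.le
  calc μ {ω | α < ∑ j ∈ range (N ω), X j ω}
      ≤ μ {ω | m + 1 ≤ N ω} +
          ∑ k ∈ range (m + 1), μ {ω | α ≤ ∑ j ∈ range k, X j ω} :=
        measure_lt_stopped_le_add_sum μ (fun n ω => ∑ j ∈ range n, X j ω) N α m
    _ ≤ ENNReal.ofReal (q ^ m) +
          ∑ k ∈ range (m + 1), ENNReal.ofReal (exp (-l₀ * α) * M ^ k) := by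
        gcongr with k
        · simpa using hNtail (m + 1) (by omega)
        · rw [← ofReal_measureReal]
          exact ENNReal.ofReal_le_ofReal <|
            hindep.measureReal_le_sum_range_le hident hl₀.le hexp α k
    _ = ENNReal.ofReal (q ^ m + exp (-l₀ * α) * ∑ k ∈ range (m + 1), M ^ k) := by
        rw [mul_sum, ENNReal.ofReal_add (by positivity) (by positivity),
          ENNReal.ofReal_sum_of_nonneg fun k _ => by positivity]
    _ ≤ ENNReal.ofReal (C * exp (-c * α)) := by
        refine ENNReal.ofReal_le_ofReal (hm.trans' ?_)
        rw [mul_comm (_ ^ m)]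
        gcongr
        exact sum_range_succ_pow_le_exp_one_mul_pow hM m

/-- If `(X_j)` are i.i.d. real random variables with `E[exp (λ₀ X₁)] < ∞` for some
`λ₀ > 0`, `Sₙ` is the `n`-th partial sum, and `N` is a positive integer-valued random
variable (not necessarily independent of the `X_j`) with `P[N ≥ k] ≤ q^(k-1)` for all
`k ≥ 1`, where `q ∈ (0,1)`, then there exist `C, c > 0` (depending only on `q` and the
law of `X₁`) with `P[S_N > α] ≤ C exp (-c α)` for every `α > 0`. -/
theorem stopped_sum_exponential_tail {Ω : Type*} [MeasurableSpace Ω] (μ : Measure Ω)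
    [IsProbabilityMeasure μ] (X : ℕ → Ω → ℝ) (hmeas : ∀ i, Measurable (X i))
    (hindep : ProbabilityTheory.iIndepFun X μ)
    (hident : ∀ i, ProbabilityTheory.IdentDistrib (X i) (X 0) μ μ)
    (l₀ : ℝ) (hl₀ : 0 < l₀)
    (hexp : Integrable (fun ω => Real.exp (l₀ * X 0 ω)) μ)
    (N : Ω → ℕ) (hNpos : ∀ ω, 1 ≤ N ω)
    (q : ℝ) (hq0 : 0 < q) (hq1 : q < 1)
    (hNtail : ∀ k : ℕ, 1 ≤ k → μ {ω | k ≤ N ω} ≤ ENNReal.ofReal (q ^ (k - 1))) :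
    ∃ C c : ℝ, 0 < C ∧ 0 < c ∧ ∀ α : ℝ, 0 < α →
      μ {ω | α < ∑ j ∈ Finset.range (N ω), X j ω} ≤ ENNReal.ofReal (C * Real.exp (-c * α)) :=
  stopped_sum_exponential_tail_general μ X hindep hident l₀ hl₀ hexp N q hq0 hq1 hNtail
end

section
/- Let (X_j) be i.i.d. real random variables with E[exp(2cX₁)] < ∞ for some c > 0 and let q ∈ (0,1) satisfy q·E[exp(2cX₁)] < 1. Let S_n = X₁ + ... + X_n and let N be a positive integer-valued random variable with P[N ≥ k] ≤ q^{k−1} for all k. Then E[exp(c S_N)] ≤ q^{−1/2} Σ_{k=1}^∞ (√(q E[exp(2c X₁)]))^k < ∞. -/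
/-!
Split `E[exp (c S_N)]` according to the value `k ≥ 1` of `N`. On `{N = k}` Cauchy–Schwarz gives
`E[exp (c S_k); N = k] ≤ E[exp (2c S_k)]^(1/2) P[N ≥ k]^(1/2)`, independence and identical
distribution give `E[exp (2c S_k)] = E[exp (2c X₁)]^k`, and the tail bound turns the `k`-th term
into `q^(-1/2) (√(q E[exp (2c X₁)]))^k`, a convergent geometric series. Everything is done with
lower Lebesgue integrals, so no integrability of `exp (c S_N)` has to be established beforehand.
-/

open scoped ENNReal
open MeasureTheory Real Finset ProbabilityTheory

section

variable {Ω : Type*} [MeasurableSpace Ω] {μ : Measure Ω}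

theorem integral_le_of_lintegral_ofReal_le {f : Ω → ℝ} (hf : ∀ ω, 0 ≤ f ω) {R : ℝ} (hR : 0 ≤ R)
    (h : ∫⁻ ω, ENNReal.ofReal (f ω) ∂μ ≤ ENNReal.ofReal R) : ∫ ω, f ω ∂μ ≤ R := calc
  ∫ ω, f ω ∂μ ≤ ‖∫ ω, f ω ∂μ‖ := Real.le_norm_self _
  _ ≤ (∫⁻ ω, ENNReal.ofReal ‖f ω‖ ∂μ).toReal := norm_integral_le_lintegral_norm f
  _ ≤ R := by
    simp_rw [norm_of_nonneg (hf _)]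
    exact ENNReal.toReal_le_of_le_ofReal hR h

theorem setLIntegral_le_lintegral_sq_rpow_mul_measure_rpow {f : Ω → ℝ≥0∞}
    (hf : AEMeasurable f μ) (s : Set Ω) :
    ∫⁻ ω in s, f ω ∂μ ≤ (∫⁻ ω, f ω ^ 2 ∂μ) ^ (1 / 2 : ℝ) * μ s ^ (1 / 2 : ℝ) := by
  have hCS := ENNReal.lintegral_mul_le_Lp_mul_Lq (μ.restrict s) Real.HolderConjugate.two_two
    hf.restrict (aemeasurable_const (b := (1 : ℝ≥0∞)))
  simp only [Pi.mul_apply, mul_one, setLIntegral_const, one_pow, one_mul,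
    ENNReal.rpow_two] at hCS
  exact hCS.trans (by gcongr; exact Measure.restrict_le_self)

theorem lintegral_stopped_eq_tsum {N : Ω → ℕ} (hN : Measurable N) (Y : ℕ → Ω → ℝ≥0∞) :
    ∫⁻ ω, Y (N ω) ω ∂μ = ∑' k, ∫⁻ ω in {ω | N ω = k}, Y k ω ∂μ := by
  have hmeas k : MeasurableSet {ω | N ω = k} := hN (measurableSet_singleton k)
  have hdisj : Pairwise (Function.onFun Disjoint fun k => {ω | N ω = k}) :=
    fun i j hij => Set.disjoint_left.mpr fun ω hi hj => hij (hi.symm.trans hj)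
  have hunion : (⋃ k, {ω | N ω = k}) = Set.univ :=
    Set.iUnion_eq_univ_iff.mpr fun ω => ⟨N ω, rfl⟩
  rw [← setLIntegral_univ, ← hunion, lintegral_iUnion hmeas hdisj]
  exact tsum_congr fun k => setLIntegral_congr_fun (hmeas k) fun ω hω => by rw [hω]

theorem lintegral_stopped_le_tsum {N : Ω → ℕ} (hN : Measurable N) (hN_pos : ∀ ω, 1 ≤ N ω)
    {Y : ℕ → Ω → ℝ≥0∞} (hY : ∀ k, AEMeasurable (Y k) μ) :
    ∫⁻ ω, Y (N ω) ω ∂μ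
      ≤ ∑' k, (∫⁻ ω, Y (k + 1) ω ^ 2 ∂μ) ^ (1 / 2 : ℝ) * μ {ω | k + 1 ≤ N ω} ^ (1 / 2 : ℝ) := by
  have hN_zero : {ω | N ω = 0} = ∅ := by
    simp only [Nat.one_le_iff_ne_zero.mp (hN_pos _), Set.ofPred_false]
  rw [lintegral_stopped_eq_tsum hN, tsum_eq_zero_add' ENNReal.summable, hN_zero,
    Measure.restrict_empty, lintegral_zero_measure, zero_add]
  refine ENNReal.tsum_le_tsum fun k => (setLIntegral_le_lintegral_sq_rpow_mul_measure_rpow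
    (hY (k + 1)) _).trans ?_
  gcongr with ω
  exact fun h => h.ge

theorem lintegral_exp_mul_sum_range_eq_pow {X : ℕ → Ω → ℝ} (hmeas : ∀ i, Measurable (X i))
    (hindep : iIndepFun X μ) (hident : ∀ i, IdentDistrib (X i) (X 0) μ μ) (t : ℝ) (k : ℕ) :
    ∫⁻ ω, ENNReal.ofReal (exp (t * ∑ j ∈ range k, X j ω)) ∂μ
      = (∫⁻ ω, ENNReal.ofReal (exp (t * X 0 ω)) ∂μ) ^ k := by
  have hu : Measurable fun x : ℝ => ENNReal.ofReal (exp (t * x)) := by fun_prop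
  have hprod ω : ENNReal.ofReal (exp (t * ∑ j ∈ range k, X j ω))
      = ∏ j ∈ range k, ENNReal.ofReal (exp (t * X j ω)) := by
    rw [mul_sum, exp_sum, ENNReal.ofReal_prod_of_nonneg fun j _ => (exp_pos _).le]
  have hident_lintegral j : ∫⁻ ω, ENNReal.ofReal (exp (t * X j ω)) ∂μ
      = ∫⁻ ω, ENNReal.ofReal (exp (t * X 0 ω)) ∂μ :=
    ((hident j).comp hu).lintegral_eq
  simp_rw [hprod]
  rw [lintegral_prod_eq_prod_lintegral_of_indepFun (range k)
    (fun j ω => ENNReal.ofReal (exp (t * X j ω))) (hindep.comp _ fun _ => hu)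
    fun j => hu.comp (hmeas j), prod_congr rfl fun j _ => hident_lintegral j, prod_const,
    card_range]

end

theorem ofReal_pow_succ_rpow_mul_ofReal_pow_rpow {q E : ℝ} (hq : 0 < q) (hE : 0 ≤ E) (k : ℕ) :
    (ENNReal.ofReal E ^ (k + 1)) ^ (1 / 2 : ℝ) * ENNReal.ofReal (q ^ k) ^ (1 / 2 : ℝ)
      = ENNReal.ofReal (q ^ (-(1 : ℝ) / 2) * √(q * E) ^ (k + 1)) := by
  have sqrt_pow {x : ℝ} (hx : 0 ≤ x) (n : ℕ) : √(x ^ n) = √x ^ n := by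
    rw [← sqrt_sq (pow_nonneg (sqrt_nonneg x) n), ← pow_mul, mul_comm, pow_mul, sq_sqrt hx]
  have hq_rpow : q ^ (-(1 : ℝ) / 2) = (√q)⁻¹ := by
    rw [neg_div, rpow_neg hq.le, sqrt_eq_rpow, one_div]
  have hsqrt_q : 0 < √q := sqrt_pos.mpr hq
  rw [← ENNReal.ofReal_pow hE, ENNReal.ofReal_rpow_of_nonneg (by positivity) one_half_pos.le,
    ENNReal.ofReal_rpow_of_nonneg (by positivity) one_half_pos.le, ← ENNReal.ofReal_mul
    (by positivity), ← sqrt_eq_rpow, ← sqrt_eq_rpow, hq_rpow, sqrt_mul hq.le, sqrt_pow hE,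
    sqrt_pow hq.le]
  congr 1
  field_simp
  ring

theorem exp_stopped_sum_le_general {Ω : Type*} [MeasurableSpace Ω] (μ : Measure Ω)
    (X : ℕ → Ω → ℝ) (hmeas : ∀ i, Measurable (X i))
    (hindep : ProbabilityTheory.iIndepFun X μ)
    (hident : ∀ i, ProbabilityTheory.IdentDistrib (X i) (X 0) μ μ)
    (c : ℝ)
    (hexp : Integrable (fun ω => Real.exp (2 * c * X 0 ω)) μ)
    (q : ℝ) (hq0 : 0 < q)
    (hqE : q * ∫ ω, Real.exp (2 * c * X 0 ω) ∂μ < 1)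
    (N : Ω → ℕ) (hNmeas : Measurable N) (hNpos : ∀ ω, 1 ≤ N ω)
    (hNtail : ∀ k : ℕ, 1 ≤ k → μ {ω | k ≤ N ω} ≤ ENNReal.ofReal (q ^ (k - 1))) :
    ∫ ω, Real.exp (c * ∑ j ∈ Finset.range (N ω), X j ω) ∂μ
      ≤ q ^ (-(1 : ℝ) / 2) *
        ∑' k : ℕ, (Real.sqrt (q * ∫ ω, Real.exp (2 * c * X 0 ω) ∂μ)) ^ (k + 1) := by
  set E := ∫ ω, exp (2 * c * X 0 ω) ∂μ
  set r := √(q * E)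
  have hE : 0 ≤ E := integral_nonneg fun ω => (exp_pos _).le
  have hr : r < 1 := by rwa [sqrt_lt' one_pos, one_pow]
  have hmoment k : ∫⁻ ω, ENNReal.ofReal (exp (c * ∑ j ∈ range k, X j ω)) ^ 2 ∂μ
      = ENNReal.ofReal E ^ k := by
    simp_rw [← ENNReal.ofReal_pow (exp_pos _).le, ← exp_nat_mul, Nat.cast_ofNat, ← mul_assoc]
    rw [lintegral_exp_mul_sum_range_eq_pow hmeas hindep hident,
      ← ofReal_integral_eq_lintegral_ofReal hexp (ae_of_all _ fun ω => (exp_pos _).le)]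
  refine integral_le_of_lintegral_ofReal_le (fun ω => (exp_pos _).le) (by positivity) ?_
  calc ∫⁻ ω, ENNReal.ofReal (exp (c * ∑ j ∈ range (N ω), X j ω)) ∂μ
      ≤ ∑' k, (ENNReal.ofReal E ^ (k + 1)) ^ (1 / 2 : ℝ) * μ {ω | k + 1 ≤ N ω} ^ (1 / 2 : ℝ) := by
        simpa only [hmoment] using lintegral_stopped_le_tsum (μ := μ) hNmeas hNpos
          (Y := fun k ω => ENNReal.ofReal (exp (c * ∑ j ∈ range k, X j ω))) fun k => by fun_prop
    _ ≤ ∑' k, ENNReal.ofReal (q ^ (-(1 : ℝ) / 2) * r ^ (k + 1)) :=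
      ENNReal.tsum_le_tsum fun k => by
        rw [← ofReal_pow_succ_rpow_mul_ofReal_pow_rpow hq0 hE]
        gcongr
        simpa using hNtail (k + 1) k.succ_pos
    _ = ENNReal.ofReal (q ^ (-(1 : ℝ) / 2) * ∑' k, r ^ (k + 1)) := by
      rw [← ENNReal.ofReal_tsum_of_nonneg (fun k => by positivity), tsum_mul_left]
      exact ((summable_nat_add_iff 1).mpr
        (summable_geometric_of_lt_one (sqrt_nonneg _) hr)).mul_left _

/-- Let `(X_j)` be i.i.d. real random variables with `E[exp (2c X₁)] < ∞` for some
`c > 0`, and let `q ∈ (0,1)` satisfy `q * E[exp (2c X₁)] < 1`. If `Sₙ` is the `n`-th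
partial sum and `N` is a positive integer-valued random variable with
`P[N ≥ k] ≤ q^(k-1)` for all `k ≥ 1`, then
`E[exp (c S_N)] ≤ q^(-1/2) * ∑_{k=1}^∞ (√(q E[exp (2c X₁)]))^k`. -/
theorem exp_stopped_sum_le {Ω : Type*} [MeasurableSpace Ω] (μ : Measure Ω)
    [IsProbabilityMeasure μ] (X : ℕ → Ω → ℝ) (hmeas : ∀ i, Measurable (X i))
    (hindep : ProbabilityTheory.iIndepFun X μ)
    (hident : ∀ i, ProbabilityTheory.IdentDistrib (X i) (X 0) μ μ)
    (c : ℝ) (hc : 0 < c)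
    (hexp : Integrable (fun ω => Real.exp (2 * c * X 0 ω)) μ)
    (q : ℝ) (hq0 : 0 < q) (hq1 : q < 1)
    (hqE : q * ∫ ω, Real.exp (2 * c * X 0 ω) ∂μ < 1)
    (N : Ω → ℕ) (hNmeas : Measurable N) (hNpos : ∀ ω, 1 ≤ N ω)
    (hNtail : ∀ k : ℕ, 1 ≤ k → μ {ω | k ≤ N ω} ≤ ENNReal.ofReal (q ^ (k - 1))) :
    ∫ ω, Real.exp (c * ∑ j ∈ Finset.range (N ω), X j ω) ∂μ
      ≤ q ^ (-(1 : ℝ) / 2) *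
        ∑' k : ℕ, (Real.sqrt (q * ∫ ω, Real.exp (2 * c * X 0 ω) ∂μ)) ^ (k + 1) :=
  exp_stopped_sum_le_general μ X hmeas hindep hident c hexp q hq0 hqE N hNmeas hNpos hNtail
end
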